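/- Let X be a real Banach space, let Λ be a directed set, and let (T_λ)_{λ∈Λ} be a family of compact continuous linear operators on X such that sup_{λ∈Λ} ‖I_X − T_λ‖ < 2 and such that the adjoints converge to the identity in the strong operator topology, i.e., for every x* ∈ X* the net (x* ∘ T_λ)_{λ∈Λ} converges in norm to x*. Then X contains no 𝔇-points, and X* contains no weak* Δ-points. -/

import Mathlib

/-!
If `γ ∈ S_{X*}` lies in the weak* closure of `{h ∈ B_{X*} : ‖γ - h‖ > 2 - δ}` for every `δ > 0`,
then `‖I - T‖ ≥ 2 - ‖γ ∘ T - γ‖` for every compact `T`: take `h` weak* close to `γ` on a finite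
net of `T(B_X)`, so that `h ∘ T ≈ γ ∘ T ≈ γ` on `B_X`, and a point `y` with `γ y ≈ 1` and
`h y ≈ -1`; then `‖I - T‖ ≥ h (T y) - h y ≈ 2`. Hence no such `γ` exists when
`sup ‖I - T_λ‖ < 2` and `γ ∘ T_λ → γ`.

Both a 𝔇-point `x` and a weak* Δ-point `g` produce such a `γ` as a weak* cluster point
(Banach–Alaoglu) of functionals `h` that are almost antipodal to `γ` at some point of the ball.
For `x`, the index runs over finite subsets `Φ ⊆ D(x)`: a thin slice of the average of `Φ` lies
in the slices of all its members, so once `γ ∈ Φ` the points lie in slices of `γ`. For `g`, the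
points are built as midpoints `v (n + 1) = (v n + z n) / 2`, with `h n` nearly `1` at `v n` and
nearly `-1` at `z n`; since each step only halves, `h m` stays nearly `1` at every earlier `v n`,
and hence so does `γ`.
-/

open NormedSpace Topology Filter

/-- `x` is a 𝔇-point of the real Banach space `X`. -/
def IsDPoint (X : Type*) [NormedAddCommGroup X] [NormedSpace ℝ X] (x : X) : Prop :=
  ‖x‖ = 1 ∧ ∀ f : StrongDual ℝ X, ‖f‖ = 1 → f x = 1 → ∀ ε : ℝ, 0 < ε →
    sSup ((fun y => ‖x - y‖) '' {y : X | ‖y‖ ≤ 1 ∧ 1 - ε < f y}) = 2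

/-- `g` is a weak* Δ-point of the dual of `X`. -/
def IsWeakStarDeltaPoint (X : Type*) [NormedAddCommGroup X] [NormedSpace ℝ X]
    (g : StrongDual ℝ X) : Prop :=
  ‖g‖ = 1 ∧ ∀ x : X, ‖x‖ = 1 → ∀ ε : ℝ, 0 < ε → 1 - ε < g x →
    sSup ((fun h => ‖g - h‖) ''
      {h : StrongDual ℝ X | ‖h‖ ≤ 1 ∧ 1 - ε < h x}) = 2

theorem exists_gt_of_sSup_eq_of_ne_zero {S : Set ℝ} {a b : ℝ} (hS : sSup S = a) (ha : a ≠ 0)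
    (hb : b < a) : ∃ s ∈ S, b < s := by
  have hne : S.Nonempty := by
    by_contra h
    rw [Set.not_nonempty_iff_eq_empty.1 h, Real.sSup_empty] at hS
    exact ha hS.symm
  exact exists_lt_of_lt_csSup hne (hS ▸ hb)

theorem one_sub_lt_of_card_sub_lt_sum {ι : Type*} {s : Finset ι} {a : ι → ℝ} {ε : ℝ}
    (ha : ∀ i ∈ s, a i ≤ 1) (hsum : (s.card : ℝ) - ε < ∑ i ∈ s, a i) {i : ι} (hi : i ∈ s) :
    1 - ε < a i := by
  have hle : 1 - a i ≤ ∑ j ∈ s, (1 - a j) :=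
    Finset.single_le_sum (f := fun j => 1 - a j) (fun j hj => sub_nonneg.2 (ha j hj)) hi
  rw [Finset.sum_sub_distrib, Finset.sum_const, nsmul_one] at hle
  linarith

theorem monotone_two_pow_mul_one_sub {a b : ℕ → ℝ} (hb : ∀ n, b n ≤ 1)
    (ha : ∀ n, a (n + 1) = (a n + b n) / 2) : Monotone fun n => 2 ^ n * (1 - a n) := by
  refine monotone_nat_of_le_succ fun n => ?_
  have h2n : (0 : ℝ) < 2 ^ n := by positivity
  rw [ha, pow_succ]
  nlinarith [hb n]

section

variable {X : Type*} [NormedAddCommGroup X] [NormedSpace ℝ X] {g : StrongDual ℝ X} {x : X}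

theorem abs_apply_le_one {f : StrongDual ℝ X} {v : X} (hf : ‖f‖ ≤ 1) (hv : ‖v‖ ≤ 1) :
    |f v| ≤ 1 := by
  simpa using f.le_of_opNorm_le_of_le hf hv

theorem exists_lt_apply_of_lt_norm (f : StrongDual ℝ X) {r : ℝ} (hr : r < ‖f‖) :
    ∃ z : X, ‖z‖ ≤ 1 ∧ r < f z := by
  obtain ⟨z, hz, hfz⟩ := f.exists_lt_apply_of_lt_opNorm hr
  rw [Real.norm_eq_abs] at hfz
  rcases le_or_gt 0 (f z) with h | h
  · exact ⟨z, hz.le, by rwa [abs_of_nonneg h] at hfz⟩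
  · exact ⟨-z, by simpa using hz.le, by rw [abs_of_neg h] at hfz; simpa using hfz⟩

theorem exists_point_of_two_sub_lt_norm_sub {g h : StrongDual ℝ X} {δ : ℝ} (hg : ‖g‖ ≤ 1)
    (hh : ‖h‖ ≤ 1) (hgh : 2 - δ < ‖g - h‖) :
    ∃ z : X, ‖z‖ ≤ 1 ∧ 1 - δ < g z ∧ h z < -1 + δ := by
  obtain ⟨z, hz, hghz⟩ := exists_lt_apply_of_lt_norm (g - h) hgh
  have hgz := abs_le.1 (abs_apply_le_one hg hz)
  have hhz := abs_le.1 (abs_apply_le_one hh hz)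
  rw [sub_apply] at hghz
  exact ⟨z, hz, by linarith, by linarith⟩

theorem exists_functional_of_two_sub_lt_norm_sub {y : X} {δ : ℝ} (hx : ‖x‖ ≤ 1)
    (hy : ‖y‖ ≤ 1) (hxy : 2 - δ < ‖x - y‖) :
    ∃ f : StrongDual ℝ X, ‖f‖ ≤ 1 ∧ 1 - δ < f x ∧ f y < -1 + δ := by
  obtain ⟨f, hf, hfxy⟩ := exists_dual_vector'' ℝ (x - y)
  have hfx := abs_le.1 (abs_apply_le_one hf hx)
  have hfy := abs_le.1 (abs_apply_le_one hf hy)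
  rw [map_sub, RCLike.ofReal_real_eq_id, id] at hfxy
  exact ⟨f, hf, by linarith, by linarith⟩

/-- The weak* analogue of a super Δ-point. -/
def IsWeakStarSuperDeltaPoint (γ : StrongDual ℝ X) : Prop :=
  ‖γ‖ = 1 ∧ ∀ δ > 0, StrongDual.toWeakDual γ ∈
    closure (StrongDual.toWeakDual '' {h : StrongDual ℝ X | ‖h‖ ≤ 1 ∧ 2 - δ < ‖γ - h‖})

theorem IsWeakStarSuperDeltaPoint.exists_antipodal {γ : StrongDual ℝ X}
    (hγ : IsWeakStarSuperDeltaPoint γ) {t : Set X} (ht : t.Finite) {ε : ℝ} (hε : 0 < ε) :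
    ∃ h : StrongDual ℝ X, ‖h‖ ≤ 1 ∧ (∀ v ∈ t, dist (h v) (γ v) < ε) ∧
      ∃ y : X, ‖y‖ ≤ 1 ∧ 1 - ε < γ y ∧ h y < -1 + ε := by
  have hnear : ∀ᶠ ψ : WeakDual ℝ X in 𝓝 (StrongDual.toWeakDual γ),
      ∀ v ∈ t, dist (ψ v) (γ v) < ε :=
    (eventually_all_finite ht).2 fun v _ =>
      (WeakDual.eval_continuous v).continuousAt.eventually (Metric.ball_mem_nhds _ hε)
  obtain ⟨_, ⟨h, ⟨hh, hfar⟩, rfl⟩, hhγ⟩ :=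
    ((mem_closure_iff_frequently.1 (hγ.2 ε hε)).and_eventually hnear).exists
  obtain ⟨y, hy, hγy, hhy⟩ := exists_point_of_two_sub_lt_norm_sub hγ.1.le hh hfar
  exact ⟨h, hh, hhγ, y, hy, hγy, hhy⟩

theorem IsWeakStarSuperDeltaPoint.two_sub_le_norm_id_sub {γ : StrongDual ℝ X}
    (hγ : IsWeakStarSuperDeltaPoint γ) {T : X →L[ℝ] X} (hT : IsCompactOperator T) :
    2 - ‖γ.comp T - γ‖ ≤ ‖ContinuousLinearMap.id ℝ X - T‖ := by
  refine le_of_forall_pos_lt_add fun ε hε => ?_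
  have hε' : 0 < ε / 5 := by positivity
  obtain ⟨t, -, ht, hcover⟩ := (hT.isCompact_closure_image_closedBall 1).finite_cover_balls hε'
  obtain ⟨h, hh, hclose, y, hy, hγy, hhy⟩ := hγ.exists_antipodal ht hε'
  obtain ⟨v, hv, hTyv⟩ : ∃ v ∈ t, dist (T y) v < ε / 5 := by
    simpa using hcover (subset_closure ⟨y, mem_closedBall_zero_iff.2 hy, rfl⟩)
  have hhγ : ‖h - γ‖ ≤ 2 := (norm_sub_le h γ).trans (by linarith [hγ.1])
  have hnet := (h - γ).le_of_opNorm_le_of_le hhγ (dist_eq_norm (T y) v ▸ hTyv.le)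
  have hγT := (γ.comp T - γ).le_of_opNorm_le_of_le le_rfl hy
  have hIT := h.le_of_opNorm_le_of_le hh
    ((ContinuousLinearMap.id ℝ X - T).le_of_opNorm_le_of_le le_rfl hy)
  have hv' := hclose v hv
  rw [Real.dist_eq] at hv'
  simp only [sub_apply, ContinuousLinearMap.comp_apply, ContinuousLinearMap.id_apply,
    map_sub, Real.norm_eq_abs, mul_one, one_mul] at hnet hγT hIT
  linarith [abs_le.1 hnet, abs_le.1 hγT, abs_le.1 hIT, abs_lt.1 hv']

theorem exists_mapClusterPt_toWeakDual {ι : Type*} {F : Filter ι} [F.NeBot]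
    (H : ι → StrongDual ℝ X) (hH : ∀ i, ‖H i‖ ≤ 1) :
    ∃ γ : StrongDual ℝ X, ‖γ‖ ≤ 1 ∧
      MapClusterPt (StrongDual.toWeakDual γ) F (StrongDual.toWeakDual ∘ H) := by
  have hball : map (StrongDual.toWeakDual ∘ H) F ≤
      𝓟 (WeakDual.toStrongDual ⁻¹' Metric.closedBall (0 : StrongDual ℝ X) 1) :=
    le_principal_iff.2 (mem_map.2 (univ_mem' fun i => by simpa using hH i))
  obtain ⟨γ, hγ, hcl⟩ := (WeakDual.isCompact_closedBall (𝕜 := ℝ) 0 1).exists_mapClusterPt hball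
  exact ⟨WeakDual.toStrongDual γ, by simpa using hγ, hcl⟩

theorem MapClusterPt.le_apply_of_eventually {ι : Type*} {F : Filter ι} {H : ι → StrongDual ℝ X}
    {γ : StrongDual ℝ X}
    (hcl : MapClusterPt (StrongDual.toWeakDual γ) F (StrongDual.toWeakDual ∘ H))
    {v : X} {a : ℝ} (h : ∀ᶠ i in F, a ≤ H i v) : a ≤ γ v :=
  isClosed_Ici.mem_of_mapClusterPt
    (hcl.continuousAt_comp (WeakDual.eval_continuous v).continuousAt) h

theorem isWeakStarSuperDeltaPoint_of_mapClusterPt {ι : Type*} {F : Filter ι} [F.NeBot]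
    {H : ι → StrongDual ℝ X} {Y : ι → X} {e : ι → ℝ} {γ : StrongDual ℝ X}
    (hH : ∀ i, ‖H i‖ ≤ 1) (hY : ∀ i, ‖Y i‖ ≤ 1) (hγ : ‖γ‖ ≤ 1)
    (hcl : MapClusterPt (StrongDual.toWeakDual γ) F (StrongDual.toWeakDual ∘ H))
    (he : Tendsto e F (𝓝 0)) (hγY : ∀ᶠ i in F, 1 - e i ≤ γ (Y i))
    (hHY : ∀ᶠ i in F, H i (Y i) ≤ -1 + e i) : IsWeakStarSuperDeltaPoint γ := by
  have hγY_le : ∀ i, γ (Y i) ≤ ‖γ‖ := fun i => by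
    have := γ.le_of_opNorm_le_of_le le_rfl (hY i)
    rw [Real.norm_eq_abs, mul_one] at this
    exact (le_abs_self _).trans this
  refine ⟨le_antisymm hγ ?_, fun δ hδ => ?_⟩
  · refine le_of_tendsto (by simpa using tendsto_const_nhds.sub he : Tendsto (1 - e ·) F (𝓝 1)) ?_
    exact hγY.mono fun i hi => hi.trans (hγY_le i)
  · refine isClosed_closure.mem_of_mapClusterPt hcl ?_
    filter_upwards [hγY, hHY, he.eventually (gt_mem_nhds (half_pos hδ))] with i hγi hHi hei
    refine subset_closure ⟨H i, ⟨hH i, ?_⟩, rfl⟩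
    have := (γ - H i).le_of_opNorm_le_of_le le_rfl (hY i)
    rw [Real.norm_eq_abs, sub_apply, mul_one] at this
    linarith [le_abs_self (γ (Y i) - H i (Y i))]

theorem IsWeakStarDeltaPoint.exists_far_of_lt_apply (hg : IsWeakStarDeltaPoint X g)
    (hx : ‖x‖ = 1) {ε δ : ℝ} (hε : 0 < ε) (hgx : 1 - ε < g x) (hδ : 0 < δ) :
    ∃ h : StrongDual ℝ X, ‖h‖ ≤ 1 ∧ 1 - ε < h x ∧ 2 - δ < ‖g - h‖ := by
  obtain ⟨_, ⟨h, hS, rfl⟩, hfar⟩ :=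
    exists_gt_of_sSup_eq_of_ne_zero (hg.2 x hx ε hε hgx) two_ne_zero (sub_lt_self 2 hδ)
  exact ⟨h, hS.1, hS.2, hfar⟩

theorem IsWeakStarDeltaPoint.exists_antipodal_of_lt_apply (hg : IsWeakStarDeltaPoint X g)
    {v : X} (hv : ‖v‖ ≤ 1) {ε δ : ℝ} (hε : 0 < ε) (hε1 : ε ≤ 1) (hgv : 1 - ε < g v)
    (hδ : 0 < δ) :
    ∃ h : StrongDual ℝ X, ‖h‖ ≤ 1 ∧ 1 - 2 * ε < h v ∧
      ∃ z : X, ‖z‖ ≤ 1 ∧ 1 - δ < g z ∧ h z < -1 + δ := by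
  have hgv_le : g v ≤ ‖v‖ := by
    have := g.le_opNorm v
    rw [hg.1, one_mul, Real.norm_eq_abs] at this
    exact (le_abs_self _).trans this
  have hv0 : 0 < ‖v‖ := by linarith
  have hgx : 1 - ε < g (‖v‖⁻¹ • v) := by
    rw [map_smul, smul_eq_mul]
    have : g v ≤ ‖v‖⁻¹ * g v := le_mul_of_one_le_left (by linarith) (one_le_inv₀ hv0 |>.2 hv)
    linarith
  obtain ⟨h, hh, hhx, hfar⟩ :=
    hg.exists_far_of_lt_apply (norm_smul_inv_norm (norm_pos_iff.1 hv0)) hε hgx hδ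
  obtain ⟨z, hz, hgz, hhz⟩ := exists_point_of_two_sub_lt_norm_sub hg.1.le hh hfar
  refine ⟨h, hh, ?_, z, hz, hgz, hhz⟩
  rw [map_smul, smul_eq_mul, RCLike.ofReal_real_eq_id, id] at hhx
  have hhv : h v = ‖v‖ * (‖v‖⁻¹ * h v) := by rw [mul_inv_cancel_left₀ hv0.ne']
  rw [hhv]
  nlinarith

theorem IsWeakStarDeltaPoint.exists_midpoint_step (hg : IsWeakStarDeltaPoint X g) (n : ℕ) {v : X}
    (hv : ‖v‖ ≤ 1) (hgv : 1 - (1 / 2) ^ (n + 1) < g v) :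
    ∃ h : StrongDual ℝ X, ∃ z : X, ‖h‖ ≤ 1 ∧ ‖z‖ ≤ 1 ∧ 1 - (1 / 2) ^ n < h v ∧
      h z < -1 + (1 / 2) ^ (n + 1) ∧ 1 - (1 / 2) ^ (n + 2) < g ((2 : ℝ)⁻¹ • (v + z)) := by
  have hε : (0 : ℝ) < (1 / 2) ^ (n + 1) := by positivity
  have hε1 : ((1 : ℝ) / 2) ^ (n + 1) ≤ 1 := pow_le_one₀ (by norm_num) (by norm_num)
  have hgv1 := (abs_le.1 (abs_apply_le_one hg.1.le hv)).2
  -- taking `δ` to be the slack of `g v` keeps `g` above the next threshold at the midpoint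
  obtain ⟨h, hh, hhv, z, hz, hgz, hhz⟩ := hg.exists_antipodal_of_lt_apply hv hε hε1 hgv
    (sub_pos.2 hgv : 0 < g v - (1 - (1 / 2) ^ (n + 1)))
  have hpow : ((1 : ℝ) / 2) ^ n = 2 * (1 / 2) ^ (n + 1) := by rw [pow_succ]; ring
  refine ⟨h, z, hh, hz, by linarith, by linarith, ?_⟩
  rw [map_smul, map_add, smul_eq_mul, pow_succ _ (n + 1)]
  linarith

theorem IsWeakStarDeltaPoint.exists_midpoint_seq (hg : IsWeakStarDeltaPoint X g) :
    ∃ (V Z : ℕ → X) (H : ℕ → StrongDual ℝ X), ∀ n, ‖V n‖ ≤ 1 ∧ ‖Z n‖ ≤ 1 ∧ ‖H n‖ ≤ 1 ∧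
      V (n + 1) = (2 : ℝ)⁻¹ • (V n + Z n) ∧ 1 - (1 / 2) ^ n < H n (V n) ∧
      H n (Z n) < -1 + (1 / 2) ^ (n + 1) := by
  obtain ⟨v₀, hv₀, hgv₀⟩ := exists_lt_apply_of_lt_norm g (r := 1 / 2) (by rw [hg.1]; norm_num)
  choose! H Z hH hZ hHV hHZ hgV using
    fun n v (hv : ‖v‖ ≤ 1 ∧ 1 - (1 / 2) ^ (n + 1) < g v) => hg.exists_midpoint_step n hv.1 hv.2
  let V : ℕ → X := fun n => Nat.rec v₀ (fun n v => (2 : ℝ)⁻¹ • (v + Z n v)) n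
  have hV : ∀ n, ‖V n‖ ≤ 1 ∧ 1 - (1 / 2) ^ (n + 1) < g (V n) := by
    intro n
    induction n with
    | zero => exact ⟨hv₀, by norm_num [V, hgv₀]⟩
    | succ n ih =>
      refine ⟨?_, hgV n (V n) ih⟩
      calc ‖(2 : ℝ)⁻¹ • (V n + Z n (V n))‖ ≤ (2 : ℝ)⁻¹ * (‖V n‖ + ‖Z n (V n)‖) := by
            rw [norm_smul, Real.norm_of_nonneg (by norm_num)]
            gcongr
            exact norm_add_le _ _
        _ ≤ 1 := by linarith [ih.1, hZ n (V n) ih]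
  exact ⟨V, fun n => Z n (V n), fun n => H n (V n), fun n =>
    ⟨(hV n).1, hZ n _ (hV n), hH n _ (hV n), rfl, hHV n _ (hV n), hHZ n _ (hV n)⟩⟩

theorem IsWeakStarDeltaPoint.exists_isWeakStarSuperDeltaPoint (hg : IsWeakStarDeltaPoint X g) :
    ∃ γ : StrongDual ℝ X, IsWeakStarSuperDeltaPoint γ := by
  obtain ⟨V, Z, H, hseq⟩ := hg.exists_midpoint_seq
  choose hV hZ hH hV_succ hHV hHZ using hseq
  have hVZ : ∀ (h : StrongDual ℝ X) n, h (V (n + 1)) = (h (V n) + h (Z n)) / 2 := by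
    intro h n
    rw [hV_succ, map_smul, map_add, smul_eq_mul]
    ring
  have hHV_le : ∀ n m, n ≤ m → 1 - (1 / 2) ^ n < H m (V n) := by
    intro n m hnm
    have hmono := monotone_two_pow_mul_one_sub (a := fun k => H m (V k))
      (fun k => (abs_le.1 (abs_apply_le_one (hH m) (hZ k))).2) (hVZ _) hnm
    have hHm := hHV m
    have hinv : ∀ k : ℕ, (2 : ℝ) ^ k * (1 / 2) ^ k = 1 := fun k => by rw [← mul_pow]; norm_num
    simp only at hmono
    nlinarith [hinv n, hinv m, pow_pos (two_pos (α := ℝ)) n, pow_pos (two_pos (α := ℝ)) m]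
  obtain ⟨γ, hγ, hcl⟩ := exists_mapClusterPt_toWeakDual (F := atTop) H hH
  have hγV : ∀ n, 1 - (1 / 2) ^ n ≤ γ (V n) := fun n =>
    hcl.le_apply_of_eventually (eventually_atTop.2 ⟨n, fun m hm => (hHV_le n m hm).le⟩)
  refine ⟨γ, isWeakStarSuperDeltaPoint_of_mapClusterPt hH hZ hγ hcl
    (tendsto_pow_atTop_nhds_zero_of_lt_one (r := (1 : ℝ) / 2) (by norm_num) (by norm_num))
    (Eventually.of_forall fun n => ?_) (Eventually.of_forall fun n => ?_)⟩
  · have h1 := hγV (n + 1)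
    have h2 := (abs_le.1 (abs_apply_le_one hγ (hV n))).2
    rw [hVZ, pow_succ] at h1
    linarith
  · have := hHZ n
    rw [pow_succ] at this
    linarith [pow_pos (half_pos (one_pos (α := ℝ))) n]

theorem IsDPoint.exists_far_of_lt_apply (hx : IsDPoint X x) {φ : StrongDual ℝ X}
    (hφ : ‖φ‖ = 1) (hφx : φ x = 1) {ε δ : ℝ} (hε : 0 < ε) (hδ : 0 < δ) :
    ∃ y : X, ‖y‖ ≤ 1 ∧ 1 - ε < φ y ∧ 2 - δ < ‖x - y‖ := by
  obtain ⟨_, ⟨y, hS, rfl⟩, hfar⟩ :=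
    exists_gt_of_sSup_eq_of_ne_zero (hx.2 φ hφ hφx ε hε) two_ne_zero (sub_lt_self 2 hδ)
  exact ⟨y, hS.1, hS.2, hfar⟩

/-- The slice of the average of `Φ` of depth `ε / #Φ` lies in all the slices of depth `ε`. -/
theorem IsDPoint.exists_far_of_finset (hx : IsDPoint X x) (Φ : Finset (StrongDual ℝ X))
    (hΦ : ∀ β ∈ Φ, ‖β‖ ≤ 1 ∧ β x = 1) {ε δ : ℝ} (hε : 0 < ε) (hδ : 0 < δ) :
    ∃ y : X, ‖y‖ ≤ 1 ∧ (∀ β ∈ Φ, 1 - ε < β y) ∧ 2 - δ < ‖x - y‖ := by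
  classical
  obtain ⟨f₀, hf₀, hf₀x⟩ := exists_dual_vector'' ℝ x
  rw [hx.1, RCLike.ofReal_one] at hf₀x
  set Ψ := insert f₀ Φ
  have hΨ : ∀ β ∈ Ψ, ‖β‖ ≤ 1 ∧ β x = 1 := by
    simpa [Ψ, hf₀, hf₀x] using hΦ
  have hn : (0 : ℝ) < Ψ.card := by exact_mod_cast Finset.card_pos.2 (Finset.insert_nonempty _ _)
  set φ : StrongDual ℝ X := (Ψ.card : ℝ)⁻¹ • ∑ β ∈ Ψ, β
  have hφ_apply : ∀ v, φ v = (Ψ.card : ℝ)⁻¹ * ∑ β ∈ Ψ, β v := fun v => by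
    simp [φ]
  have hφx : φ x = 1 := by
    rw [hφ_apply, Finset.sum_congr rfl fun β hβ => (hΨ β hβ).2, Finset.sum_const, nsmul_one,
      inv_mul_cancel₀ hn.ne']
  have hφ : ‖φ‖ = 1 := by
    refine le_antisymm ?_ ?_
    · calc ‖φ‖ ≤ (Ψ.card : ℝ)⁻¹ * ∑ β ∈ Ψ, ‖β‖ := by
            rw [norm_smul, Real.norm_of_nonneg (by positivity)]
            gcongr
            exact norm_sum_le _ _
        _ ≤ (Ψ.card : ℝ)⁻¹ * Ψ.card := by
            gcongr
            simpa using Finset.sum_le_sum fun β hβ => (hΨ β hβ).1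
        _ = 1 := inv_mul_cancel₀ hn.ne'
    · simpa [hφx, hx.1] using φ.le_opNorm x
  obtain ⟨y, hy, hφy, hfar⟩ := hx.exists_far_of_lt_apply hφ hφx (div_pos hε hn) hδ
  rw [hφ_apply, lt_inv_mul_iff₀ hn, mul_sub, mul_div_cancel₀ _ hn.ne', mul_one] at hφy
  exact ⟨y, hy, fun β hβ => one_sub_lt_of_card_sub_lt_sum
    (fun β hβ => (abs_le.1 (abs_apply_le_one (hΨ β hβ).1 hy)).2) hφy (Finset.mem_insert_of_mem hβ),
    hfar⟩

theorem IsDPoint.exists_isWeakStarSuperDeltaPoint (hx : IsDPoint X x) :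
    ∃ γ : StrongDual ℝ X, IsWeakStarSuperDeltaPoint γ := by
  classical
  let e : Finset (StrongDual ℝ X) × ℕ → ℝ := fun p => 1 / ((p.2 : ℝ) + 1)
  have he_pos : ∀ p, 0 < e p := fun p => by positivity
  have hdata : ∀ p, ∃ y : X, ∃ G : StrongDual ℝ X, ‖y‖ ≤ 1 ∧ ‖G‖ ≤ 1 ∧
      (∀ β ∈ p.1, ‖β‖ ≤ 1 → β x = 1 → 1 - e p < β y) ∧ 1 - e p < G x ∧ G y < -1 + e p := by
    intro p
    obtain ⟨y, hy, hβy, hfar⟩ := hx.exists_far_of_finset {β ∈ p.1 | ‖β‖ ≤ 1 ∧ β x = 1}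
      (fun β hβ => (Finset.mem_filter.1 hβ).2) (he_pos p) (he_pos p)
    obtain ⟨G, hG, hGx, hGy⟩ := exists_functional_of_two_sub_lt_norm_sub hx.1.le hy hfar
    exact ⟨y, G, hy, hG, fun β hβ h1 h2 => hβy β (Finset.mem_filter.2 ⟨hβ, h1, h2⟩), hGx, hGy⟩
  choose Y G hY hG hβY hGx hGY using hdata
  have he : Tendsto e atTop (𝓝 0) := by
    rw [← prod_atTop_atTop_eq]
    exact tendsto_one_div_add_atTop_nhds_zero_nat.comp tendsto_snd
  obtain ⟨γ, hγ, hcl⟩ := exists_mapClusterPt_toWeakDual (F := atTop) G hG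
  have hγx : γ x = 1 := by
    refine le_antisymm (abs_le.1 (abs_apply_le_one hγ hx.1.le)).2
      (le_of_forall_sub_le fun δ hδ => ?_)
    refine hcl.le_apply_of_eventually ((he.eventually (gt_mem_nhds hδ)).mono fun p hp => ?_)
    linarith [hGx p]
  refine ⟨γ, isWeakStarSuperDeltaPoint_of_mapClusterPt hG hY hγ hcl he ?_
    (Eventually.of_forall fun p => (hGY p).le)⟩
  filter_upwards [eventually_ge_atTop ({γ}, 0)] with p hp
  exact (hβY p γ (Finset.singleton_subset_iff.1 hp.1) hγ hγx).le

end

theorem no_dPoints_of_compact_approximation_general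
    (X : Type*) [NormedAddCommGroup X] [NormedSpace ℝ X]
    (Λ : Type*) [Preorder Λ] [Nonempty Λ] [IsDirected Λ (· ≤ ·)]
    (T : Λ → X →L[ℝ] X)
    (hcompact : ∀ l, IsCompact (closure (T l '' Metric.closedBall (0 : X) 1)))
    (hsup : ∃ c : ℝ, c < 2 ∧ ∀ l, ‖ContinuousLinearMap.id ℝ X - T l‖ ≤ c)
    (hSOT : ∀ f : StrongDual ℝ X,
      Tendsto (fun l => ‖f.comp (T l) - f‖) atTop (nhds 0)) :
    (¬ ∃ x : X, IsDPoint X x) ∧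
      (¬ ∃ g : StrongDual ℝ X, IsWeakStarDeltaPoint X g) := by
  obtain ⟨c, hc, hT⟩ := hsup
  have hno : ∀ γ : StrongDual ℝ X, ¬ IsWeakStarSuperDeltaPoint γ := by
    intro γ hγ
    obtain ⟨l, hl⟩ := ((hSOT γ).eventually (gt_mem_nhds (sub_pos.2 hc))).exists
    have := hγ.two_sub_le_norm_id_sub
      ((isCompactOperator_iff_isCompact_closure_image_closedBall (T l : X →ₗ[ℝ] X) one_pos).2
        (hcompact l))
    linarith [hT l]
  exact ⟨fun ⟨_, hx⟩ => hx.exists_isWeakStarSuperDeltaPoint.elim hno,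
    fun ⟨_, hg⟩ => hg.exists_isWeakStarSuperDeltaPoint.elim hno⟩

/-- Suppose `(T l)_{l ∈ Λ}` is a net (indexed by a directed set `Λ`) of compact operators
on a real Banach space `X` with `sup_l ‖I - T l‖ < 2`, whose adjoints converge to the
identity of `X*` in the strong operator topology.  Then `X` has no 𝔇-points and `X*` has
no weak* Δ-points. -/
theorem no_dPoints_of_compact_approximation
    (X : Type*) [NormedAddCommGroup X] [NormedSpace ℝ X] [CompleteSpace X]
    (Λ : Type*) [Preorder Λ] [Nonempty Λ] [IsDirected Λ (· ≤ ·)]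
    (T : Λ → X →L[ℝ] X)
    (hcompact : ∀ l, IsCompact (closure (T l '' Metric.closedBall (0 : X) 1)))
    (hsup : ∃ c : ℝ, c < 2 ∧ ∀ l, ‖ContinuousLinearMap.id ℝ X - T l‖ ≤ c)
    (hSOT : ∀ f : StrongDual ℝ X,
      Tendsto (fun l => ‖f.comp (T l) - f‖) atTop (nhds 0)) :
    (¬ ∃ x : X, IsDPoint X x) ∧
      (¬ ∃ g : StrongDual ℝ X, IsWeakStarDeltaPoint X g) :=
  no_dPoints_of_compact_approximation_general X Λ T hcompact hsup hSOT
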